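/- In the hyperboloid model H of the hyperbolic plane with symmetries s_z(x) = 2⟨z,x⟩z − x, call (a,b,c) a double triangle of (x,y,z) if s_x(c) = a, s_y(a) = b, s_z(b) = c, which is equivalent to s_z s_y a = s_x a; then there exist triangles (x,y,z) in H for which no point a ∈ H satisfies s_z(s_y(a)) = s_x(a), i.e., not every triangle in the hyperbolic plane has a double triangle. -/

import Mathlib

/-- The Lorentzian bilinear form `⟨z,x⟩ = z₃x₃ − z₁x₁ − z₂x₂` on `ℝ³`. -/
def lorentz (z x : Fin 3 → ℝ) : ℝ := z 2 * x 2 - z 0 * x 0 - z 1 * x 1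

/-- The upper sheet of the hyperboloid: the hyperbolic plane. -/
def hypSheet : Set (Fin 3 → ℝ) := {x | lorentz x x = 1 ∧ x 2 > 0}

/-- The geodesic symmetry at `z`: `s_z(x) = 2⟨z,x⟩z − x`. -/
def hypSym (z x : Fin 3 → ℝ) : Fin 3 → ℝ := (2 * lorentz z x) • z - x

lemma hypSym_invol (x c : Fin 3 → ℝ) (hx : lorentz x x = 1) :
    hypSym x (hypSym x c) = c := by
  funext i
  simp only [hypSym, Pi.sub_apply, Pi.smul_apply, smul_eq_mul, lorentz] at hx ⊢
  linear_combination (4 * (x 2 * c 2 - x 0 * c 0 - x 1 * c 1) * x i) * hx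

/-- If `(a,b,c)` is a double triangle of `(x,y,z)` then `s_z(s_y(a)) = s_x(a)`; and there
exist triangles `(x,y,z)` in the hyperbolic plane admitting no double triangle: no point
`a ∈ H` satisfies `s_z(s_y(a)) = s_x(a)`. -/
theorem hyperbolic_triangle_without_double :
    (∀ x y z a b c : Fin 3 → ℝ,
      x ∈ hypSheet → y ∈ hypSheet → z ∈ hypSheet →
      hypSym x c = a → hypSym y a = b → hypSym z b = c →
      hypSym z (hypSym y a) = hypSym x a) ∧
    (∃ x y z : Fin 3 → ℝ, x ∈ hypSheet ∧ y ∈ hypSheet ∧ z ∈ hypSheet ∧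
      ¬ ∃ a ∈ hypSheet, hypSym z (hypSym y a) = hypSym x a) := by
  constructor
  · intro x y z a b c hx hy hz hca hab hbc
    rw [hab, hbc, ← hca, hypSym_invol x c hx.1]
  · refine ⟨![0,0,1], ![2,2,3], ![-2,2,3], ?_, ?_, ?_, ?_⟩
    · constructor <;> norm_num [lorentz, Matrix.cons_val_zero, Matrix.cons_val_one, Matrix.cons_val_two, Matrix.head_cons, Matrix.tail_cons]
    · constructor <;> norm_num [lorentz, Matrix.cons_val_zero, Matrix.cons_val_one, Matrix.cons_val_two, Matrix.head_cons, Matrix.tail_cons]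
    · constructor <;> norm_num [lorentz, Matrix.cons_val_zero, Matrix.cons_val_one, Matrix.cons_val_two, Matrix.head_cons, Matrix.tail_cons]
    · rintro ⟨a, ⟨ha1, ha2⟩, heq⟩
      have h0 := congrFun heq 0
      have h1 := congrFun heq 1
      simp only [hypSym, Pi.sub_apply, Pi.smul_apply, smul_eq_mul, lorentz,
        Matrix.cons_val_zero, Matrix.cons_val_one, Matrix.cons_val_two,
        Matrix.head_cons, Matrix.tail_cons] at h0 h1
      simp only [lorentz] at ha1
      nlinarith [h0, h1, ha1, sq_nonneg (a 2), sq_nonneg (a 0)]
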